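/- (Vertex regularity identity.) Fix m ≥ 3 and let μ ∈ Opt(m). Then for every vertex x ∈ supp μ̄, m · β(μ; m) · μ̄(x) = Σ_{C : x ∈ V(C)} 2·μ(C), where the sum is over all unlabeled m-cycles C in the support graph G_μ containing the vertex x. -/

import Mathlib

open Finset

/-- The cyclic successor of an index in `Fin m`. -/
def cnext {m : ℕ} (i : Fin m) : Fin m := ⟨(i.1 + 1) % m, Nat.mod_lt _ i.pos⟩

/-- `μ` is a probability mass on the 2-element subsets of `X`: it is nonnegative,
vanishes on the diagonal, and has total mass 1. -/
def IsProbMass {X : Type*} [Fintype X] [DecidableEq X] (μ : Sym2 X → ℝ) : Prop :=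
  (∀ e, 0 ≤ μ e) ∧ (∀ e : Sym2 X, e.IsDiag → μ e = 0) ∧ (∑ e : Sym2 X, μ e) = 1

/-- The weight `μ(C)` of the labeled cycle `f 0, f 1, ..., f (m-1), f 0`. -/
def cycleWeight {X : Type*} (μ : Sym2 X → ℝ) {m : ℕ} (f : Fin m → X) : ℝ :=
  ∏ i : Fin m, μ s(f i, f (cnext i))

/-- `β(μ; m)`: the sum of `μ(C)` over all unlabeled `m`-cycles `C` in the complete
graph on `X`, computed as the sum over labeled cycles divided by `2m` (each unlabeled
`m`-cycle has exactly `2m` labelings). -/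
noncomputable def beta {X : Type*} [Fintype X] [DecidableEq X] (μ : Sym2 X → ℝ) (m : ℕ) : ℝ :=
  (∑ f : Fin m → X, if Function.Injective f then cycleWeight μ f else 0) / (2 * m)

/-- `β(m)`: the supremum of `β(μ; m)` over all probability masses `μ` on the
2-element subsets of a finite set (every finite set being a copy of some `Fin n`). -/
noncomputable def betaSup (m : ℕ) : ℝ :=
  sSup {b : ℝ | ∃ (n : ℕ) (μ : Sym2 (Fin n) → ℝ), IsProbMass μ ∧ b = beta μ m}

/-- The weighted degree `μ̄(x) = ∑_{y ≠ x} μ(xy)`. -/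
noncomputable def wdeg {X : Type*} [Fintype X] [DecidableEq X] (μ : Sym2 X → ℝ) (x : X) : ℝ :=
  ∑ y ∈ Finset.univ.filter (· ≠ x), μ s(x, y)

/-- The support graph `G_μ`, whose edges are the pairs of positive mass. -/
def supportGraph {X : Type*} (μ : Sym2 X → ℝ) : SimpleGraph X where
  Adj x y := x ≠ y ∧ 0 < μ s(x, y)
  symm := ⟨fun x y h => ⟨h.1.symm, by rw [Sym2.eq_swap]; exact h.2⟩⟩
  loopless := ⟨fun x h => h.1 rfl⟩


/-!
Up to the factor `2m`, `β(μ; m)` is a homogeneous polynomial of degree `m` in the edge masses.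
If `μ` is optimal and `μ(e) > 0`, moving along the segment from `μ` towards the point mass at `e`
stays among probability masses in both directions, so the derivative of `β` along it vanishes:
the partial derivative at `e` equals `∑ₐ μ(a) ∂ₐβ`, which is `m · β` by Euler's identity.
Summing `μ(xy) ∂_{xy}β` over the edges at `x` counts every cycle through `x` twice, once for each
of its two edges at `x`.
-/
section Cnext

variable {m : ℕ}

lemma cnext_eq_finRotate (i : Fin m) : cnext i = finRotate m i := by
  ext; simp [cnext, finRotate_apply, Fin.val_add]

lemma cnext_injective : Function.Injective (cnext (m := m)) := fun i j h =>
  (finRotate m).injective (by simpa only [cnext_eq_finRotate] using h)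

lemma cnext_surjective : Function.Surjective (cnext (m := m)) :=
  Finite.surjective_of_injective cnext_injective

lemma cnext_ne (hm : 2 ≤ m) (i : Fin m) : cnext i ≠ i := by
  intro h
  have h' : (i.val + 1) % m = i.val := congrArg Fin.val h
  rcases Nat.lt_or_ge (i.val + 1) m with hlt | hge
  · rw [Nat.mod_eq_of_lt hlt] at h'; omega
  · rw [show i.val + 1 = m by omega, Nat.mod_self] at h'; omega

lemma cnext_induction (hm : 0 < m) {P : Fin m → Prop} (h0 : P ⟨0, hm⟩)
    (hstep : ∀ i, P i → P (cnext i)) (i : Fin m) : P i := by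
  obtain ⟨k, hk⟩ := i
  induction k with
  | zero => exact h0
  | succ k ih =>
    have hnext : cnext ⟨k, by omega⟩ = ⟨k + 1, hk⟩ := Fin.ext (Nat.mod_eq_of_lt hk)
    exact hnext ▸ hstep _ (ih (by omega))

lemma eq_of_cycle_edges_eq (hm : 3 ≤ m) {X : Type*} {f g : Fin m → X}
    (hf : Function.Injective f)
    (h : ∀ i, s(f i, f (cnext i)) = s(g i, g (cnext i))) : f = g := by
  let i₀ : Fin m := ⟨0, by omega⟩
  let i₁ : Fin m := ⟨1, by omega⟩
  let i₂ : Fin m := ⟨2, by omega⟩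
  have h₀₁ : cnext i₀ = i₁ := Fin.ext (Nat.mod_eq_of_lt (show 0 + 1 < m by omega))
  have h₁₂ : cnext i₁ = i₂ := Fin.ext (Nat.mod_eq_of_lt (show 1 + 1 < m by omega))
  have hbase : f i₀ = g i₀ := by
    have e₀ := h i₀
    have e₁ := h i₁
    rw [h₀₁] at e₀
    rw [h₁₂] at e₁
    rcases Sym2.eq_iff.mp e₀ with ⟨h₀, -⟩ | ⟨h₀, -⟩
    · exact h₀
    · -- reversed orientation: then `f i₀ = g i₁` lies on the edge `s(f i₁, f i₂)`
      rw [← h₀] at e₁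
      rcases Sym2.eq_iff.mp e₁ with ⟨h₁, -⟩ | ⟨-, h₂⟩
      · exact absurd (congrArg Fin.val (hf h₁)) one_ne_zero
      · exact absurd (congrArg Fin.val (hf h₂)) two_ne_zero
  funext i
  exact cnext_induction (P := fun i => f i = g i) (by omega) hbase
    (fun i hi => by
      have hi' := h i
      rw [hi] at hi'
      exact Sym2.congr_right.mp hi') i

lemma card_filter_mem_cycle_edge (hm : 2 ≤ m) {X : Type*} [DecidableEq X] {f : Fin m → X}
    (hf : Function.Injective f) (x : X) :
    #{i | x ∈ s(f i, f (cnext i))} = if ∃ i, f i = x then 2 else 0 := by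
  split_ifs with hx
  · obtain ⟨k, rfl⟩ := hx
    obtain ⟨p, hp⟩ := cnext_surjective k
    have hkp : k ≠ p := fun h => cnext_ne hm p (h ▸ hp)
    rw [← card_pair hkp]
    congr 1
    ext i
    simp only [mem_filter, mem_univ, true_and, mem_insert, mem_singleton, Sym2.mem_iff]
    constructor
    · rintro (h | h)
      · exact Or.inl (hf h).symm
      · exact Or.inr (cnext_injective ((hf h).symm.trans hp.symm))
    · rintro (rfl | rfl)
      · exact Or.inl rfl
      · exact Or.inr (congrArg f hp.symm)
  · simp only [not_exists] at hx
    simp [Sym2.mem_iff, eq_comm (a := x), hx]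

end Cnext

section CycleSum

variable {X : Type*} [Fintype X] [DecidableEq X]

noncomputable def cycleSum (μ : Sym2 X → ℝ) (m : ℕ) : ℝ :=
  ∑ f : Fin m → X, if Function.Injective f then cycleWeight μ f else 0

/-- The partial derivative of `cycleSum · m` in the coordinate `e`. -/
noncomputable def cyclePartial (μ : Sym2 X → ℝ) (m : ℕ) (e : Sym2 X) : ℝ :=
  ∑ f : Fin m → X, if Function.Injective f then
    ∑ i, if s(f i, f (cnext i)) = e then ∏ j ∈ univ.erase i, μ s(f j, f (cnext j)) else 0
  else 0

lemma beta_eq_cycleSum_div (μ : Sym2 X → ℝ) (m : ℕ) : beta μ m = cycleSum μ m / (2 * m) := rfl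

lemma sum_mul_cyclePartial (μ c : Sym2 X → ℝ) (m : ℕ) :
    ∑ e, c e * cyclePartial μ m e = ∑ f : Fin m → X, if Function.Injective f then
      ∑ i, c s(f i, f (cnext i)) * ∏ j ∈ univ.erase i, μ s(f j, f (cnext j)) else 0 := by
  simp only [cyclePartial, mul_sum, mul_ite, mul_zero]
  rw [sum_comm]
  refine sum_congr rfl fun f _ => ?_
  split_ifs
  · rw [sum_comm]
    simp only [sum_ite_eq, mem_univ, if_true]
  · simp

/-- Euler's identity for the homogeneous polynomial `cycleSum · m` of degree `m`. -/
lemma sum_mul_cyclePartial_self (μ : Sym2 X → ℝ) (m : ℕ) :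
    ∑ e, μ e * cyclePartial μ m e = m * cycleSum μ m := by
  rw [sum_mul_cyclePartial, cycleSum, mul_sum]
  refine sum_congr rfl fun f _ => ?_
  split_ifs
  · rw [sum_congr rfl fun i _ =>
      mul_prod_erase univ (fun j => μ s(f j, f (cnext j))) (mem_univ i)]
    simp [cycleWeight]
  · simp

lemma hasDerivAt_cycleSum_line (μ c : Sym2 X → ℝ) (m : ℕ) :
    HasDerivAt (fun t => cycleSum (fun e => μ e + t * c e) m)
      (∑ e, c e * cyclePartial μ m e) 0 := by
  rw [sum_mul_cyclePartial]
  refine HasDerivAt.fun_sum fun f _ => ?_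
  by_cases hf : Function.Injective f
  · simp only [hf, if_true, cycleWeight]
    have hprod := HasDerivAt.fun_finsetProd (u := univ) (x := (0 : ℝ))
      (f := fun i t => μ s(f i, f (cnext i)) + t * c s(f i, f (cnext i)))
      (f' := fun i => c s(f i, f (cnext i)))
      (fun i _ => by
        simpa using ((hasDerivAt_id' (0 : ℝ)).mul_const (c s(f i, f (cnext i)))).const_add
          (μ s(f i, f (cnext i))))
    simpa [mul_comm] using hprod
  · simpa only [hf, if_false] using hasDerivAt_const (0 : ℝ) (0 : ℝ)

end CycleSum

section Bound

variable {X : Type*} [Fintype X] [DecidableEq X] {m : ℕ}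

/-- For `m ≥ 3` a labeled cycle is determined by its edge sequence, so `cycleSum` is bounded by
the sum of `∏ i, μ (w i)` over all edge sequences `w`, which is `(∑ e, μ e) ^ m`. -/
lemma cycleSum_le_one (hm : 3 ≤ m) {μ : Sym2 X → ℝ} (h0 : ∀ e, 0 ≤ μ e)
    (h1 : ∑ e, μ e = 1) : cycleSum μ m ≤ 1 := by
  let edges : (Fin m → X) → Fin m → Sym2 X := fun f i => s(f i, f (cnext i))
  have hinj : Set.InjOn edges (univ.filter Function.Injective : Finset (Fin m → X)) :=
    fun f hf g _ hfg => eq_of_cycle_edges_eq hm (mem_filter.1 hf).2 (congrFun hfg)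
  calc cycleSum μ m = ∑ f ∈ univ.filter Function.Injective, ∏ i, μ (edges f i) := by
        rw [sum_filter]; rfl
    _ = ∑ w ∈ (univ.filter Function.Injective).image edges, ∏ i, μ (w i) :=
        (sum_image (f := fun w => ∏ i, μ (w i)) hinj).symm
    _ ≤ ∑ w : Fin m → Sym2 X, ∏ i, μ (w i) :=
        sum_le_sum_of_subset_of_nonneg (subset_univ _) fun w _ _ => prod_nonneg fun i _ => h0 _
    _ = 1 := by rw [← Fintype.prod_sum fun _ e => μ e]; simp [h1]

lemma bddAbove_beta (hm : 3 ≤ m) :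
    BddAbove {b : ℝ | ∃ (n : ℕ) (μ : Sym2 (Fin n) → ℝ), IsProbMass μ ∧ b = beta μ m} := by
  refine ⟨1 / (2 * m), ?_⟩
  rintro _ ⟨n, μ, hμ, rfl⟩
  exact div_le_div_of_nonneg_right (cycleSum_le_one hm hμ.1 hμ.2.2) (by positivity)

variable {Y : Type*} [Fintype Y] [DecidableEq Y]

lemma IsProbMass.comp_sym2Map {μ : Sym2 X → ℝ} (hμ : IsProbMass μ) (σ : Y ≃ X) :
    IsProbMass (μ ∘ Sym2.map σ) := by
  have hbij : Function.Bijective (Sym2.map σ) :=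
    ⟨Sym2.map.injective σ.injective, fun e => ⟨Sym2.map σ.symm e, by simp [Sym2.map_map]⟩⟩
  refine ⟨fun e => hμ.1 _, fun e he => hμ.2.1 _ he.map, ?_⟩
  rw [Fintype.sum_bijective _ hbij (μ ∘ Sym2.map σ) μ fun _ => rfl, hμ.2.2]

lemma beta_comp_sym2Map (μ : Sym2 X → ℝ) (σ : Y ≃ X) (m : ℕ) :
    beta (μ ∘ Sym2.map σ) m = beta μ m := by
  rw [beta_eq_cycleSum_div, beta_eq_cycleSum_div, cycleSum, cycleSum,
    Fintype.sum_bijective (σ ∘ ·) σ.bijective.comp_left]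
  intro f
  simp [σ.injective.of_comp_iff, cycleWeight]

lemma beta_le_betaSup (hm : 3 ≤ m) {μ : Sym2 X → ℝ} (hμ : IsProbMass μ) :
    beta μ m ≤ betaSup m :=
  le_csSup (bddAbove_beta hm) ⟨_, _, hμ.comp_sym2Map (Fintype.equivFin X).symm,
    (beta_comp_sym2Map μ _ m).symm⟩

end Bound

section Optimal

variable {X : Type*} [Fintype X] [DecidableEq X] {m : ℕ}

/-- The mass `(1 - t) μ + t δ_e`. -/
lemma IsProbMass.add_mul_single_sub {μ : Sym2 X → ℝ} (hμ : IsProbMass μ) {e : Sym2 X}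
    {t : ℝ} (ht : |t| < μ e) :
    IsProbMass fun a => μ a + t * ((if a = e then 1 else 0) - μ a) := by
  obtain ⟨h0, hdiag, h1⟩ := hμ
  have he1 : μ e ≤ 1 := h1 ▸ single_le_sum (fun a _ => h0 a) (mem_univ e)
  obtain ⟨ht₁, ht₂⟩ := abs_lt.mp ht
  refine ⟨fun a => ?_, fun a ha => ?_, ?_⟩
  · dsimp only
    split_ifs with hae
    · subst hae
      nlinarith
    · nlinarith [h0 a]
  · have hae : a ≠ e := fun hae => by linarith [abs_nonneg t, hdiag a ha, hae ▸ ht]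
    simp [hae, hdiag a ha]
  · simp [sum_add_distrib, ← mul_sum, sum_sub_distrib, h1]

lemma cyclePartial_eq_of_beta_eq_betaSup (hm : 3 ≤ m) {μ : Sym2 X → ℝ} (hμ : IsProbMass μ)
    (hopt : beta μ m = betaSup m) {e : Sym2 X} (he : 0 < μ e) :
    cyclePartial μ m e = m * cycleSum μ m := by
  let c : Sym2 X → ℝ := fun a => (if a = e then 1 else 0) - μ a
  have hmax : IsLocalMax (fun t => cycleSum (fun a => μ a + t * c a) m) 0 := by
    filter_upwards [Metric.ball_mem_nhds 0 he] with t ht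
    rw [Metric.mem_ball, Real.dist_eq, sub_zero] at ht
    have hle := beta_le_betaSup hm (hμ.add_mul_single_sub ht)
    rw [← hopt, beta_eq_cycleSum_div, beta_eq_cycleSum_div,
      div_le_div_iff_of_pos_right (by positivity)] at hle
    simpa using hle
  have hcrit := hmax.hasDerivAt_eq_zero (hasDerivAt_cycleSum_line μ c m)
  have hdir : ∑ a, c a * cyclePartial μ m a = cyclePartial μ m e - m * cycleSum μ m := by
    simp [c, sub_mul, sum_sub_distrib, sum_mul_cyclePartial_self]
  linarith

end Optimal

section Vertex

variable {X : Type*} [Fintype X] [DecidableEq X] {m : ℕ}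

lemma sum_filter_ne_mk_eq_sum_ite {M : Type*} [AddCommMonoid M] (h : Sym2 X → M) (x : X) :
    ∑ y ∈ univ.filter (· ≠ x), h s(x, y) = ∑ e, if x ∈ e ∧ ¬ e.IsDiag then h e else 0 := by
  have hinj : Set.InjOn (fun y => s(x, y)) (univ.filter (· ≠ x) : Finset X) :=
    fun _ _ _ _ hyz => Sym2.congr_right.mp hyz
  rw [← sum_filter, ← sum_image (f := h) hinj]
  congr 1
  ext e
  induction e using Sym2.ind with
  | _ a b =>
    simp only [mem_image, mem_filter, mem_univ, true_and, Sym2.eq_iff, Sym2.mem_iff,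
      Sym2.mk_isDiag_iff]
    aesop

lemma sum_filter_ne_mul_cyclePartial (hm : 2 ≤ m) (μ : Sym2 X → ℝ) (x : X) :
    ∑ y ∈ univ.filter (· ≠ x), μ s(x, y) * cyclePartial μ m s(x, y) =
      ∑ f : Fin m → X, if Function.Injective f ∧ ∃ i, f i = x then 2 * cycleWeight μ f else 0 := by
  simp only [sum_filter_ne_mk_eq_sum_ite (fun e => μ e * cyclePartial μ m e), ← ite_zero_mul,
    sum_mul_cyclePartial]
  refine sum_congr rfl fun f _ => ?_
  by_cases hf : Function.Injective f
  · have hterm : ∀ i, (if x ∈ s(f i, f (cnext i)) ∧ ¬ s(f i, f (cnext i)).IsDiag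
        then μ s(f i, f (cnext i)) else 0) * ∏ j ∈ univ.erase i, μ s(f j, f (cnext j)) =
        if x ∈ s(f i, f (cnext i)) then cycleWeight μ f else 0 := fun i => by
      have hdiag : ¬ s(f i, f (cnext i)).IsDiag := by
        rw [Sym2.mk_isDiag_iff]
        exact fun h => cnext_ne hm i (hf h).symm
      simp only [hdiag, not_false_eq_true, and_true]
      split_ifs
      · exact mul_prod_erase univ (fun j => μ s(f j, f (cnext j))) (mem_univ i)
      · exact zero_mul _
    simp only [hf, true_and, if_true, hterm, ← sum_filter, sum_const,
      card_filter_mem_cycle_edge hm hf, nsmul_eq_mul]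
    split_ifs <;> simp
  · simp [hf]

end Vertex

lemma cycleWeight_eq_zero_of_not_forall_pos {X : Type*} {μ : Sym2 X → ℝ} (h0 : ∀ e, 0 ≤ μ e)
    {m : ℕ} {f : Fin m → X} (hf : ¬ ∀ i, 0 < μ s(f i, f (cnext i))) : cycleWeight μ f = 0 := by
  obtain ⟨i, hi⟩ := not_forall.mp hf
  exact prod_eq_zero (mem_univ i) ((not_lt.mp hi).antisymm (h0 _))

theorem vertex_regularity_general (m : ℕ) (hm : 3 ≤ m) {X : Type*} [Fintype X] [DecidableEq X]
    (μ : Sym2 X → ℝ) (hμ : IsProbMass μ) (hopt : beta μ m = betaSup m)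
    (x : X) :
    (m : ℝ) * beta μ m * wdeg μ x =
      (∑ f : Fin m → X, if Function.Injective f ∧ (∀ i, 0 < μ s(f i, f (cnext i))) ∧
          (∃ i, f i = x) then 2 * cycleWeight μ f else 0) / (2 * m) := by
  have hsupport : (∑ f : Fin m → X, if Function.Injective f ∧
      (∀ i, 0 < μ s(f i, f (cnext i))) ∧ (∃ i, f i = x) then 2 * cycleWeight μ f else 0) =
      ∑ f : Fin m → X, if Function.Injective f ∧ ∃ i, f i = x then 2 * cycleWeight μ f else 0 :=
    sum_congr rfl fun f _ => by
      by_cases hpos : ∀ i, 0 < μ s(f i, f (cnext i))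
      · simp [hpos]
      · simp [hpos, cycleWeight_eq_zero_of_not_forall_pos hμ.1 hpos]
  have hdeg : m * cycleSum μ m * wdeg μ x =
      ∑ y ∈ univ.filter (· ≠ x), μ s(x, y) * cyclePartial μ m s(x, y) := by
    rw [wdeg, mul_sum]
    refine sum_congr rfl fun y _ => ?_
    rcases (hμ.1 s(x, y)).eq_or_lt with hzero | hpos
    · simp [← hzero]
    · rw [cyclePartial_eq_of_beta_eq_betaSup hm hμ hopt hpos, mul_comm]
  rw [hsupport, ← sum_filter_ne_mul_cyclePartial (by omega), ← hdeg, beta_eq_cycleSum_div]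
  field_simp

/-- Vertex regularity identity: for `m ≥ 3` and `μ ∈ Opt(m)`, every vertex `x ∈ supp μ̄`
satisfies `m·β(μ; m)·μ̄(x) = Σ_{C ∈ C_m(G_μ), x ∈ V(C)} 2·μ(C)` (the sum over unlabeled
`m`-cycles of the support graph through `x`, computed via labeled cycles over `2m`). -/
theorem vertex_regularity (m : ℕ) (hm : 3 ≤ m) {X : Type*} [Fintype X] [DecidableEq X]
    (μ : Sym2 X → ℝ) (hμ : IsProbMass μ) (hopt : beta μ m = betaSup m)
    (x : X) (hx : 0 < wdeg μ x) :
    (m : ℝ) * beta μ m * wdeg μ x =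
      (∑ f : Fin m → X, if Function.Injective f ∧ (∀ i, 0 < μ s(f i, f (cnext i))) ∧
          (∃ i, f i = x) then 2 * cycleWeight μ f else 0) / (2 * m) :=
  vertex_regularity_general m hm μ hμ hopt x
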